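/- arXiv:1711.07711 — 6 statements merged into one kernel-verified Lean document; each statement's English description precedes it below -/
import Mathlib

section
/- Let p be a prime, m ≥ 1 and n = 2m+1. For g₁, g₂ ∈ U_{m+1}(F_p), let λ(g₁) ∈ U_n(F_p) be the matrix agreeing with the identity except that its top-left (m+1)×(m+1) block equals g₁, and let ρ(g₂) ∈ U_n(F_p) be the matrix agreeing with the identity except that its bottom-right (m+1)×(m+1) block equals g₂. Then for every m×m matrix h over F_p: (λ(g₁)·ρ(g₂)) · ι(h) · (λ(g₁)·ρ(g₂))⁻¹ = ι( π(g₁) · h · π'(g₂)⁻¹ ). In other words, the conjugation action of U_n(F_p)/S_n ≅ U_{m+1}(F_p) × U_{m+1}(F_p) on S_n ≅ V_m ⊗ V_m* is the natural action pulled back along (π, π'). -/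
/-- `g` is an upper unitriangular matrix. -/
def IsUni {n : ℕ} {R : Type*} [CommRing R] (g : Matrix (Fin n) (Fin n) R) : Prop :=
  (∀ i, g i i = 1) ∧ ∀ i j : Fin n, (j : ℕ) < (i : ℕ) → g i j = 0

/-- `ι(h)`: the identity matrix except that its top right `m × m` block
(rows `1,…,m` and columns `m+2,…,2m+1`, in one-based indexing) is `h`. -/
def iota (p m : ℕ) (h : Matrix (Fin m) (Fin m) (ZMod p)) :
    Matrix (Fin (2 * m + 1)) (Fin (2 * m + 1)) (ZMod p) :=
  Matrix.of fun i j =>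
    (if i = j then 1 else 0) +
      if hij : (i : ℕ) < m ∧ m + 1 ≤ (j : ℕ) then
        h ⟨i, hij.1⟩ ⟨(j : ℕ) - (m + 1), by have := j.isLt; omega⟩
      else 0

/-- `λ(g₁)`: the identity `(2m+1) × (2m+1)` matrix except that its top left
`(m+1) × (m+1)` block is `g₁`. -/
def lam (p m : ℕ) (g₁ : Matrix (Fin (m + 1)) (Fin (m + 1)) (ZMod p)) :
    Matrix (Fin (2 * m + 1)) (Fin (2 * m + 1)) (ZMod p) :=
  Matrix.of fun i j =>
    if hij : (i : ℕ) < m + 1 ∧ (j : ℕ) < m + 1 then g₁ ⟨i, hij.1⟩ ⟨j, hij.2⟩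
    else if i = j then 1 else 0

/-- `ρ(g₂)`: the identity `(2m+1) × (2m+1)` matrix except that its bottom right
`(m+1) × (m+1)` block is `g₂`. -/
def rho (p m : ℕ) (g₂ : Matrix (Fin (m + 1)) (Fin (m + 1)) (ZMod p)) :
    Matrix (Fin (2 * m + 1)) (Fin (2 * m + 1)) (ZMod p) :=
  Matrix.of fun i j =>
    if hij : m ≤ (i : ℕ) ∧ m ≤ (j : ℕ) then
      g₂ ⟨(i : ℕ) - m, by have := i.isLt; omega⟩ ⟨(j : ℕ) - m, by have := j.isLt; omega⟩
    else if i = j then 1 else 0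

/-- `π`: delete the last row and the last column. -/
def pim (p m : ℕ) (g : Matrix (Fin (m + 1)) (Fin (m + 1)) (ZMod p)) :
    Matrix (Fin m) (Fin m) (ZMod p) :=
  Matrix.of fun i j => g i.castSucc j.castSucc

/-- `π'`: delete the first row and the first column. -/
def pim' (p m : ℕ) (g : Matrix (Fin (m + 1)) (Fin (m + 1)) (ZMod p)) :
    Matrix (Fin m) (Fin m) (ZMod p) :=
  Matrix.of fun i j => g i.succ j.succ

/-!
Write `ι(h) = 1 + C(h)`, where `C(h)` is `h` placed in rows `1,…,m` and columns `m+2,…,2m+1`.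
Rows `m+2,…` of `λ(g)` and columns `1,…,m` of `ρ(g)` are those of the identity, so
`C(h) λ(g) = C(h)` and `ρ(g) C(h) = C(h)`. For unitriangular `g`, row `m+1` of `g` vanishes in
columns `1,…,m` and column `1` vanishes in rows `2,…`, so `λ(g) C(h) = C(π(g) h)` and
`C(h) ρ(g) = C(h π'(g))`. Hence `λ(g) ι(h) = ι(π(g) h) λ(g)` and
`ι(h) ρ(g) = ρ(g) ι(h π'(g))`, and conjugating by `λ(g₁) ρ(g₂)` gives the claim.
-/

open Matrix

namespace IsUni

variable {n : ℕ} {R : Type*} [CommRing R] {g : Matrix (Fin n) (Fin n) R}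

theorem det_eq_one (hg : IsUni g) : g.det = 1 := by
  rw [det_of_isUpperTriangular fun i j hij => hg.2 i j hij]
  simp [hg.1]

theorem isUnit_det (hg : IsUni g) : IsUnit g.det :=
  hg.det_eq_one ▸ isUnit_one

end IsUni

theorem Fin.sum_eq_sum_shift_of_eq_zero {M : Type*} [AddCommMonoid M] {n : ℕ} (a m : ℕ)
    (h : a + m ≤ n) {f : Fin n → M}
    (hf : ∀ k : Fin n, (k : ℕ) < a ∨ a + m ≤ k → f k = 0) :
    ∑ k, f k = ∑ s : Fin m, f ⟨s + a, by omega⟩ := by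
  refine (Fintype.sum_of_injective (fun s : Fin m => (⟨s + a, by omega⟩ : Fin n))
    (fun s t hst => Fin.ext (by simpa using hst)) _ f (fun k hk => hf k ?_) fun _ => rfl).symm
  by_contra! hak
  exact hk ⟨⟨k - a, by omega⟩, Fin.ext (by dsimp only; omega)⟩

section Conjugation

variable {p m : ℕ}

def corner (h : Matrix (Fin m) (Fin m) (ZMod p)) :
    Matrix (Fin (2 * m + 1)) (Fin (2 * m + 1)) (ZMod p) :=
  of fun i j =>
    if hij : (i : ℕ) < m ∧ m < (j : ℕ) then
      h ⟨i, hij.1⟩ ⟨(j : ℕ) - (m + 1), by have := j.isLt; omega⟩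
    else 0

theorem iota_eq_one_add_corner (h : Matrix (Fin m) (Fin m) (ZMod p)) :
    iota p m h = 1 + corner h := by
  ext i j
  simp [iota, corner, one_apply]

theorem corner_apply_of_lt (h : Matrix (Fin m) (Fin m) (ZMod p)) {i j : Fin (2 * m + 1)}
    (hi : (i : ℕ) < m) (hj : m < (j : ℕ)) :
    corner h i j = h ⟨i, hi⟩ ⟨(j : ℕ) - (m + 1), by have := j.isLt; omega⟩ :=
  dif_pos ⟨hi, hj⟩

theorem corner_apply_eq_zero (h : Matrix (Fin m) (Fin m) (ZMod p)) {i j : Fin (2 * m + 1)}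
    (hij : ¬((i : ℕ) < m ∧ m < (j : ℕ))) : corner h i j = 0 :=
  dif_neg hij

theorem corner_mul_eq_self {A : Matrix (Fin (2 * m + 1)) (Fin (2 * m + 1)) (ZMod p)}
    (hA : ∀ k : Fin (2 * m + 1), m < (k : ℕ) →
      A k = (1 : Matrix (Fin (2 * m + 1)) (Fin (2 * m + 1)) (ZMod p)) k)
    (h : Matrix (Fin m) (Fin m) (ZMod p)) : corner h * A = corner h := by
  conv_rhs => rw [← Matrix.mul_one (corner h)]
  ext i j
  rw [mul_apply, mul_apply]
  refine Finset.sum_congr rfl fun k _ => ?_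
  by_cases hk : m < (k : ℕ)
  · rw [hA k hk]
  · rw [corner_apply_eq_zero _ fun hik => hk hik.2, zero_mul, zero_mul]

theorem mul_corner_eq_self {A : Matrix (Fin (2 * m + 1)) (Fin (2 * m + 1)) (ZMod p)}
    (hA : ∀ i k : Fin (2 * m + 1), (k : ℕ) < m →
      A i k = (1 : Matrix (Fin (2 * m + 1)) (Fin (2 * m + 1)) (ZMod p)) i k)
    (h : Matrix (Fin m) (Fin m) (ZMod p)) : A * corner h = corner h := by
  conv_rhs => rw [← Matrix.one_mul (corner h)]
  ext i j
  rw [mul_apply, mul_apply]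
  refine Finset.sum_congr rfl fun k _ => ?_
  by_cases hk : (k : ℕ) < m
  · rw [hA i k hk]
  · rw [corner_apply_eq_zero _ fun hkj => hk hkj.1, mul_zero, mul_zero]

theorem corner_mul_lam (g : Matrix (Fin (m + 1)) (Fin (m + 1)) (ZMod p))
    (h : Matrix (Fin m) (Fin m) (ZMod p)) : corner h * lam p m g = corner h :=
  corner_mul_eq_self (fun k hk => by ext j; simp [lam, one_apply]; omega) h

theorem rho_mul_corner (g : Matrix (Fin (m + 1)) (Fin (m + 1)) (ZMod p))
    (h : Matrix (Fin m) (Fin m) (ZMod p)) : rho p m g * corner h = corner h :=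
  mul_corner_eq_self (fun i k hk => by simp [rho, one_apply]; omega) h

theorem lam_apply_of_lt (g : Matrix (Fin (m + 1)) (Fin (m + 1)) (ZMod p))
    {i j : Fin (2 * m + 1)} (hi : (i : ℕ) < m + 1) (hj : (j : ℕ) < m + 1) :
    lam p m g i j = g ⟨i, hi⟩ ⟨j, hj⟩ :=
  dif_pos ⟨hi, hj⟩

theorem rho_apply_of_le (g : Matrix (Fin (m + 1)) (Fin (m + 1)) (ZMod p))
    {i j : Fin (2 * m + 1)} (hi : m ≤ (i : ℕ)) (hj : m ≤ (j : ℕ)) :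
    rho p m g i j = g ⟨(i : ℕ) - m, by have := i.isLt; omega⟩
      ⟨(j : ℕ) - m, by have := j.isLt; omega⟩ :=
  dif_pos ⟨hi, hj⟩

theorem IsUni.lam {g : Matrix (Fin (m + 1)) (Fin (m + 1)) (ZMod p)} (hg : IsUni g) :
    IsUni (lam p m g) := by
  constructor
  · intro i
    by_cases hi : (i : ℕ) < m + 1
    · rw [lam_apply_of_lt g hi hi]
      exact hg.1 _
    · rw [_root_.lam, of_apply, dif_neg fun h => hi h.1, if_pos rfl]
  · intro i j hij
    by_cases hi : (i : ℕ) < m + 1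
    · rw [lam_apply_of_lt g hi (by omega)]
      exact hg.2 _ _ hij
    · rw [_root_.lam, of_apply, dif_neg fun h => hi h.1, if_neg (Fin.ne_of_gt hij)]

theorem IsUni.rho {g : Matrix (Fin (m + 1)) (Fin (m + 1)) (ZMod p)} (hg : IsUni g) :
    IsUni (rho p m g) := by
  constructor
  · intro i
    by_cases hi : m ≤ (i : ℕ)
    · rw [rho_apply_of_le g hi hi]
      exact hg.1 _
    · rw [_root_.rho, of_apply, dif_neg fun h => hi h.1, if_pos rfl]
  · intro i j hij
    by_cases hj : m ≤ (j : ℕ)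
    · rw [rho_apply_of_le g (by omega) hj]
      exact hg.2 _ _ (by dsimp only; omega)
    · rw [_root_.rho, of_apply, dif_neg fun h => hj h.2, if_neg (Fin.ne_of_gt hij)]

theorem IsUni.pim' {g : Matrix (Fin (m + 1)) (Fin (m + 1)) (ZMod p)} (hg : IsUni g) :
    IsUni (pim' p m g) :=
  ⟨fun _ => hg.1 _, fun _ _ hij => hg.2 _ _ (Fin.succ_lt_succ_iff.2 hij)⟩

theorem lam_mul_corner {g : Matrix (Fin (m + 1)) (Fin (m + 1)) (ZMod p)} (hg : IsUni g)
    (h : Matrix (Fin m) (Fin m) (ZMod p)) :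
    lam p m g * corner h = corner (pim p m g * h) := by
  ext i j
  rw [mul_apply]
  by_cases hj : m < (j : ℕ)
  · rw [Fin.sum_eq_sum_shift_of_eq_zero 0 m (by omega) fun k hk => by
      rw [corner_apply_eq_zero _ (by omega), mul_zero]]
    by_cases hi : (i : ℕ) < m
    · rw [corner_apply_of_lt _ hi hj, mul_apply]
      refine Finset.sum_congr rfl fun s _ => ?_
      rw [corner_apply_of_lt _ (by dsimp only; omega) hj,
        lam_apply_of_lt g (by omega) (by dsimp only; omega)]
      rfl
    · rw [corner_apply_eq_zero _ (by omega)]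
      exact Finset.sum_eq_zero fun s _ => by rw [hg.lam.2 _ _ (by dsimp only; omega), zero_mul]
  · simp [corner, hj]

theorem corner_mul_rho {g : Matrix (Fin (m + 1)) (Fin (m + 1)) (ZMod p)} (hg : IsUni g)
    (h : Matrix (Fin m) (Fin m) (ZMod p)) :
    corner h * rho p m g = corner (h * pim' p m g) := by
  ext i j
  rw [mul_apply]
  by_cases hi : (i : ℕ) < m
  · rw [Fin.sum_eq_sum_shift_of_eq_zero (m + 1) m (by omega) fun k hk => by
      rw [corner_apply_eq_zero _ (by omega), zero_mul]]
    by_cases hj : m < (j : ℕ)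
    · rw [corner_apply_of_lt _ hi hj, mul_apply]
      refine Finset.sum_congr rfl fun s _ => ?_
      rw [corner_apply_of_lt _ hi (by dsimp only; omega),
        rho_apply_of_le g (by dsimp only; omega) (by omega)]
      simp only [pim', of_apply]
      congr 2 <;> ext <;> simp <;> omega
    · rw [corner_apply_eq_zero _ (by omega)]
      exact Finset.sum_eq_zero fun s _ => by rw [hg.rho.2 _ _ (by dsimp only; omega), mul_zero]
  · simp [corner, hi]

theorem lam_mul_iota {g : Matrix (Fin (m + 1)) (Fin (m + 1)) (ZMod p)} (hg : IsUni g)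
    (h : Matrix (Fin m) (Fin m) (ZMod p)) :
    lam p m g * iota p m h = iota p m (pim p m g * h) * lam p m g := by
  rw [iota_eq_one_add_corner, iota_eq_one_add_corner, Matrix.mul_add, Matrix.add_mul,
    lam_mul_corner hg, corner_mul_lam, Matrix.mul_one, Matrix.one_mul]

theorem iota_mul_rho {g : Matrix (Fin (m + 1)) (Fin (m + 1)) (ZMod p)} (hg : IsUni g)
    (h : Matrix (Fin m) (Fin m) (ZMod p)) :
    iota p m h * rho p m g = rho p m g * iota p m (h * pim' p m g) := by
  rw [iota_eq_one_add_corner, iota_eq_one_add_corner, Matrix.mul_add, Matrix.add_mul,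
    corner_mul_rho hg, rho_mul_corner, Matrix.mul_one, Matrix.one_mul]

theorem lam_conj_iota {g : Matrix (Fin (m + 1)) (Fin (m + 1)) (ZMod p)} (hg : IsUni g)
    (h : Matrix (Fin m) (Fin m) (ZMod p)) :
    lam p m g * iota p m h * (lam p m g)⁻¹ = iota p m (pim p m g * h) := by
  rw [lam_mul_iota hg, mul_nonsing_inv_cancel_right _ _ hg.lam.isUnit_det]

theorem rho_conj_iota {g : Matrix (Fin (m + 1)) (Fin (m + 1)) (ZMod p)} (hg : IsUni g)
    (h : Matrix (Fin m) (Fin m) (ZMod p)) :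
    rho p m g * iota p m h * (rho p m g)⁻¹ = iota p m (h * (pim' p m g)⁻¹) := by
  have hcomm : rho p m g * iota p m h = iota p m (h * (pim' p m g)⁻¹) * rho p m g := by
    rw [iota_mul_rho hg, nonsing_inv_mul_cancel_right _ _ hg.pim'.isUnit_det]
  rw [hcomm, mul_nonsing_inv_cancel_right _ _ hg.rho.isUnit_det]

end Conjugation

theorem stmt_2_general (p m : ℕ)
    (g₁ g₂ : Matrix (Fin (m + 1)) (Fin (m + 1)) (ZMod p))
    (hg₁ : IsUni g₁) (hg₂ : IsUni g₂) :
    ∀ h : Matrix (Fin m) (Fin m) (ZMod p),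
      (lam p m g₁ * rho p m g₂) * iota p m h * (lam p m g₁ * rho p m g₂)⁻¹ =
        iota p m (pim p m g₁ * h * (pim' p m g₂)⁻¹) := by
  intro h
  calc (lam p m g₁ * rho p m g₂) * iota p m h * (lam p m g₁ * rho p m g₂)⁻¹
      = lam p m g₁ * (rho p m g₂ * iota p m h * (rho p m g₂)⁻¹) * (lam p m g₁)⁻¹ := by
        simp only [Matrix.mul_inv_rev, Matrix.mul_assoc]
    _ = iota p m (pim p m g₁ * h * (pim' p m g₂)⁻¹) := by
        rw [rho_conj_iota hg₂, lam_conj_iota hg₁, Matrix.mul_assoc]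

/-- For a prime `p`, `m ≥ 1`, `n = 2m+1`, and `g₁, g₂ ∈ U_{m+1}(F_p)`:
`(λ(g₁)·ρ(g₂)) · ι(h) · (λ(g₁)·ρ(g₂))⁻¹ = ι(π(g₁) · h · π'(g₂)⁻¹)`; i.e. the conjugation
action of `U_n(F_p)/S_n ≅ U_{m+1}(F_p) × U_{m+1}(F_p)` on `S_n ≅ V_m ⊗ V_m*` is the natural
action pulled back along `(π, π')`. -/
theorem stmt_2 (p m : ℕ) (hp : p.Prime) (hm : 1 ≤ m)
    (g₁ g₂ : Matrix (Fin (m + 1)) (Fin (m + 1)) (ZMod p))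
    (hg₁ : IsUni g₁) (hg₂ : IsUni g₂) :
    ∀ h : Matrix (Fin m) (Fin m) (ZMod p),
      (lam p m g₁ * rho p m g₂) * iota p m h * (lam p m g₁ * rho p m g₂)⁻¹ =
        iota p m (pim p m g₁ * h * (pim' p m g₂)⁻¹) :=
  stmt_2_general p m g₁ g₂ hg₁ hg₂
end

section
/- Let p be a prime, m ≥ 1 and n = 2m+1. The centralizer of S_n in U_n(F_p) is exactly the set of g ∈ U_n(F_p) such that g_{ij} = 0 for all i < j with j ≤ m or i ≥ m+2; that is, the unipotent matrices whose off-diagonal nonzero entries all lie in the top-right (m+1)×(m+1) corner (rows 1,…,m+1, columns m+1,…,2m+1). -/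
/-
Write `ι(h) = 1 + E(h)`. A matrix commutes with `ι(h)` iff it commutes with `E(h)`, and the
`E(h)` include the matrix units `e_{a,b}` with `a ≤ m < b - 1` (one-based). Commuting with
`e_{a,b}` kills the off-diagonal part of column `a` and of row `b`, which gives the vanishing
conditions. Conversely, if the first `m` columns and the last `m` rows of `g` agree with those of
the identity, then `g E(h) = E(h) = E(h) g`, since `E(h)` only involves those columns and rows.
-/

open Matrix

namespace Matrix

variable {n R : Type*} [Fintype n] [DecidableEq n] [Semiring R]

theorem mul_eq_self_of_col_eq_one {g M : Matrix n n R}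
    (hg : ∀ i k j, M k j ≠ 0 → g i k = (1 : Matrix n n R) i k) : g * M = M := by
  calc g * M = 1 * M := by
        ext i j
        refine Finset.sum_congr rfl fun k _ => ?_
        by_cases hM : M k j = 0
        · simp [hM]
        · exact congrArg (· * M k j) (hg i k j hM)
    _ = M := one_mul M

theorem mul_eq_self_of_row_eq_one {g M : Matrix n n R}
    (hg : ∀ i k j, M i k ≠ 0 → g k j = (1 : Matrix n n R) k j) : M * g = M := by
  calc M * g = M * 1 := by
        ext i j
        refine Finset.sum_congr rfl fun k _ => ?_
        by_cases hM : M i k = 0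
        · simp [hM]
        · exact congrArg _ (hg i k j hM)
    _ = M := mul_one M

end Matrix

theorem IsUni.apply_eq_one_apply {n : ℕ} {R : Type*} [CommRing R]
    {g : Matrix (Fin n) (Fin n) R} (hg : IsUni g) {i j : Fin n}
    (hij : (i : ℕ) < j → g i j = 0) : g i j = (1 : Matrix (Fin n) (Fin n) R) i j := by
  rcases lt_trichotomy (i : ℕ) j with h | h | h
  · rw [hij h, one_apply_ne (Fin.ne_of_lt h)]
  · rw [Fin.ext h, hg.1, one_apply_eq]
  · rw [hg.2 i j h, one_apply_ne (Fin.ne_of_gt h)]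

section CornerBlock

variable {R : Type*}

def cornerBlock [Zero R] (m : ℕ) (h : Matrix (Fin m) (Fin m) R) :
    Matrix (Fin (2 * m + 1)) (Fin (2 * m + 1)) R :=
  of fun i j =>
    if hij : (i : ℕ) < m ∧ m + 1 ≤ (j : ℕ) then
      h ⟨i, hij.1⟩ ⟨(j : ℕ) - (m + 1), by have := j.isLt; omega⟩
    else 0

theorem iota_eq_one_add_cornerBlock (p m : ℕ) (h : Matrix (Fin m) (Fin m) (ZMod p)) :
    iota p m h = 1 + cornerBlock m h := by
  ext i j
  simp [iota, cornerBlock, one_apply]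

theorem lt_and_le_of_cornerBlock_apply_ne_zero [Zero R] {m : ℕ} {h : Matrix (Fin m) (Fin m) R}
    {i j : Fin (2 * m + 1)} (hij : cornerBlock m h i j ≠ 0) : (i : ℕ) < m ∧ m + 1 ≤ (j : ℕ) := by
  by_contra hc
  exact hij (dif_neg hc)

theorem cornerBlock_single [Zero R] {m : ℕ} (i j : Fin (2 * m + 1)) (hi : (i : ℕ) < m)
    (hj : m + 1 ≤ (j : ℕ)) (c : R) :
    cornerBlock m (single ⟨i, hi⟩ ⟨(j : ℕ) - (m + 1), by have := j.isLt; omega⟩ c) =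
      single i j c := by
  ext k l
  simp only [cornerBlock, of_apply, single, Fin.ext_iff]
  split_ifs <;> simp_all; omega

end CornerBlock

theorem commute_single_of_commute_iota {p m : ℕ}
    {g : Matrix (Fin (2 * m + 1)) (Fin (2 * m + 1)) (ZMod p)}
    (hc : ∀ h : Matrix (Fin m) (Fin m) (ZMod p), g * iota p m h = iota p m h * g)
    (i j : Fin (2 * m + 1)) (hi : (i : ℕ) < m) (hj : m + 1 ≤ (j : ℕ)) :
    Commute (single i j 1) g := by
  rw [← cornerBlock_single i j hi hj]
  refine Commute.symm ?_
  simpa [iota_eq_one_add_cornerBlock] using Commute.sub_right (hc _) (Commute.one_right g)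

theorem stmt_3_general (p m : ℕ) :
    {g : Matrix (Fin (2 * m + 1)) (Fin (2 * m + 1)) (ZMod p) | IsUni g ∧
        ∀ h : Matrix (Fin m) (Fin m) (ZMod p), g * iota p m h = iota p m h * g} =
      {g : Matrix (Fin (2 * m + 1)) (Fin (2 * m + 1)) (ZMod p) | IsUni g ∧
        ∀ i j : Fin (2 * m + 1), (i : ℕ) < (j : ℕ) →
          ((j : ℕ) + 1 ≤ m ∨ m + 2 ≤ (i : ℕ) + 1) → g i j = 0} := by
  ext g
  refine and_congr_right fun hg => ⟨fun hc i j hij hij' => ?_, fun hz h => ?_⟩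
  · rcases hij' with hj | hi
    · exact col_eq_zero_of_commute_single
        (commute_single_of_commute_iota hc j ⟨m + 1, by omega⟩ (by omega) le_rfl)
        (Fin.ne_of_lt hij)
    · exact row_eq_zero_of_commute_single
        (commute_single_of_commute_iota hc ⟨0, by omega⟩ i (show 0 < m by omega) (by omega))
        (Fin.ne_of_gt hij)
  · have hcol : g * cornerBlock m h = cornerBlock m h :=
      mul_eq_self_of_col_eq_one fun _ _ _ hk => hg.apply_eq_one_apply fun hlt =>
        hz _ _ hlt (.inl (lt_and_le_of_cornerBlock_apply_ne_zero hk).1)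
    have hrow : cornerBlock m h * g = cornerBlock m h :=
      mul_eq_self_of_row_eq_one fun _ _ _ hk => hg.apply_eq_one_apply fun hlt =>
        hz _ _ hlt (.inr (by have := (lt_and_le_of_cornerBlock_apply_ne_zero hk).2; omega))
    rw [iota_eq_one_add_cornerBlock]
    exact (Commute.one_right g).add_right (hcol.trans hrow.symm)

/-- For a prime `p` and `m ≥ 1`, with `n = 2m+1`: the centralizer of `S_n` in `U_n(F_p)` is
exactly the set of unitriangular `g` with `g_{ij} = 0` for all `i < j` with `j ≤ m` or
`i ≥ m+2` (one-based indexing), i.e. those whose off-diagonal nonzero entries all lie in the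
top-right `(m+1) × (m+1)` corner. -/
theorem stmt_3 (p m : ℕ) (hp : p.Prime) (hm : 1 ≤ m) :
    {g : Matrix (Fin (2 * m + 1)) (Fin (2 * m + 1)) (ZMod p) | IsUni g ∧
        ∀ h : Matrix (Fin m) (Fin m) (ZMod p), g * iota p m h = iota p m h * g} =
      {g : Matrix (Fin (2 * m + 1)) (Fin (2 * m + 1)) (ZMod p) | IsUni g ∧
        ∀ i j : Fin (2 * m + 1), (i : ℕ) < (j : ℕ) →
          ((j : ℕ) + 1 ≤ m ∨ m + 2 ≤ (i : ℕ) + 1) → g i j = 0} :=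
  stmt_3_general p m
end

section
/- Let p be a prime and let E_{ij} denote the (2p+1)×(2p+1) matrix unit over F_p. Define σ₁' = I + Σ_{i=1}^{p−1} E_{i,i+1}, σ₂' = I + E_{p,p+1}, σ₃' = I + E_{p+1,p+2}, σ₄' = I + Σ_{i=p+2}^{2p} E_{i,i+1}, all elements of U_{2p+1}(F_p). Then the subgroup of U_{2p+1}(F_p) generated by σ₁', σ₂', σ₃', σ₄' contains S_{2p+1}, i.e. it contains ι(h) for every p×p matrix h over F_p. -/
/-- `σ₁' = I + Σ_{i=1}^{p−1} E_{i,i+1}` (one-based indexing). -/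
def sig1 (p : ℕ) : Matrix (Fin (2 * p + 1)) (Fin (2 * p + 1)) (ZMod p) :=
  Matrix.of fun i j =>
    (if i = j then 1 else 0) + if (j : ℕ) = (i : ℕ) + 1 ∧ (i : ℕ) + 1 < p then 1 else 0

/-- `σ₂' = I + E_{p,p+1}` (one-based indexing). -/
def sig2 (p : ℕ) : Matrix (Fin (2 * p + 1)) (Fin (2 * p + 1)) (ZMod p) :=
  Matrix.of fun i j =>
    (if i = j then 1 else 0) + if (i : ℕ) + 1 = p ∧ (j : ℕ) = (i : ℕ) + 1 then 1 else 0

/-- `σ₃' = I + E_{p+1,p+2}` (one-based indexing). -/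
def sig3 (p : ℕ) : Matrix (Fin (2 * p + 1)) (Fin (2 * p + 1)) (ZMod p) :=
  Matrix.of fun i j =>
    (if i = j then 1 else 0) + if (i : ℕ) = p ∧ (j : ℕ) = p + 1 then 1 else 0

/-- `σ₄' = I + Σ_{i=p+2}^{2p} E_{i,i+1}` (one-based indexing). -/
def sig4 (p : ℕ) : Matrix (Fin (2 * p + 1)) (Fin (2 * p + 1)) (ZMod p) :=
  Matrix.of fun i j =>
    (if i = j then 1 else 0) +
      if (j : ℕ) = (i : ℕ) + 1 ∧ p + 1 ≤ (i : ℕ) ∧ (i : ℕ) + 1 ≤ 2 * p then 1 else 0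

namespace Stmt10

abbrev RR (p : ℕ) := Matrix (Fin (2 * p + 1)) (Fin (2 * p + 1)) (ZMod p)

def EE (p a b : ℕ) (c : ZMod p) : RR p :=
  Matrix.of fun i j => if (i : ℕ) = a ∧ (j : ℕ) = b then c else 0

def N1 (p : ℕ) : RR p := ∑ t ∈ Finset.range (p - 1), EE p t (t + 1) 1

def N4 (p : ℕ) : RR p := ∑ t ∈ Finset.range (p - 1), EE p (p + 1 + t) (p + 2 + t) 1

variable {p : ℕ}

lemma EE_mul_ne {b a' : ℕ} (h : b ≠ a') (a b' : ℕ) (c c' : ZMod p) :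
    EE p a b c * EE p a' b' c' = 0 := by
  ext i j
  simp only [EE, Matrix.mul_apply, Matrix.of_apply, Matrix.zero_apply]
  apply Finset.sum_eq_zero
  intro x _
  rcases Decidable.em ((i : ℕ) = a ∧ (x : ℕ) = b) with h1 | h1
  · rw [if_neg (by omega : ¬((x : ℕ) = a' ∧ (j : ℕ) = b')), mul_zero]
  · rw [if_neg h1, zero_mul]

lemma EE_mul_eq {b : ℕ} (hb : b < 2 * p + 1) (a b' : ℕ) (c c' : ZMod p) :
    EE p a b c * EE p b b' c' = EE p a b' (c * c') := by
  ext i j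
  simp only [EE, Matrix.mul_apply, Matrix.of_apply]
  rw [Finset.sum_eq_single (⟨b, hb⟩ : Fin (2 * p + 1))]
  · by_cases hi : (i : ℕ) = a <;> by_cases hj : (j : ℕ) = b' <;> simp [hi, hj]
  · intro x _ hx
    rw [if_neg (fun hh : (i:ℕ) = a ∧ (x:ℕ) = b => hx (Fin.ext hh.2)), zero_mul]
  · simp

lemma EE_add (a b : ℕ) (c d : ZMod p) : EE p a b c + EE p a b d = EE p a b (c + d) := by
  ext i j; simp only [EE, Matrix.add_apply, Matrix.of_apply]; split_ifs <;> simp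

lemma EE_zero (a b : ℕ) : EE p a b 0 = 0 := by ext i j; simp [EE]

lemma expand_one_add (x y : RR p) : (1 + x) * (1 + y) = 1 + (x + y + x * y) := by
  noncomm_ring

lemma N1_mul_EE {k : ℕ} (h1 : 1 ≤ k) (h2 : k < p) (c : ZMod p) :
    N1 p * EE p k p c = EE p (k - 1) p c := by
  rw [N1, Finset.sum_mul, Finset.sum_eq_single (k - 1)]
  · have e : k - 1 + 1 = k := by omega
    rw [e, EE_mul_eq (by omega), one_mul]
  · intro t _ ht
    exact EE_mul_ne (by omega) _ _ _ _
  · intro hmem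
    exact absurd (Finset.mem_range.mpr (by omega)) hmem

lemma EE_mul_N1 (a : ℕ) (c : ZMod p) : EE p a p c * N1 p = 0 := by
  rw [N1, Finset.mul_sum]
  apply Finset.sum_eq_zero
  intro t ht
  exact EE_mul_ne (by have := Finset.mem_range.mp ht; omega) _ _ _ _

lemma N4_mul_EE {a : ℕ} (ha : a < p + 1) (b : ℕ) (c : ZMod p) : N4 p * EE p a b c = 0 := by
  rw [N4, Finset.sum_mul]
  apply Finset.sum_eq_zero
  intro t _
  exact EE_mul_ne (by omega) _ _ _ _

lemma EE_mul_N4 {j : ℕ} (h1 : p + 1 ≤ j) (h2 : j ≤ 2 * p - 1) (a : ℕ) (c : ZMod p) :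
    EE p a j c * N4 p = EE p a (j + 1) c := by
  have hp : 2 ≤ p := by omega
  rw [N4, Finset.mul_sum, Finset.sum_eq_single (j - (p + 1))]
  · have e : p + 1 + (j - (p + 1)) = j := by omega
    have e2 : p + 2 + (j - (p + 1)) = j + 1 := by omega
    rw [e, e2, EE_mul_eq (by omega), mul_one]
  · intro t _ ht
    exact EE_mul_ne (by omega) _ _ _ _
  · intro hmem
    exact absurd (Finset.mem_range.mpr (by omega)) hmem

lemma sig1_eq : sig1 p = 1 + N1 p := by
  ext i j
  simp only [sig1, N1, Matrix.of_apply, Matrix.add_apply, Matrix.one_apply, Matrix.sum_apply, EE]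
  congr 1
  by_cases h : (j : ℕ) = (i : ℕ) + 1 ∧ (i : ℕ) + 1 < p
  · rw [if_pos h, Finset.sum_eq_single (i : ℕ)]
    · rw [if_pos ⟨rfl, h.1⟩]
    · intro t _ ht
      rw [if_neg (by omega)]
    · intro hmem
      exact absurd (Finset.mem_range.mpr (by omega)) hmem
  · rw [if_neg h]
    exact (Finset.sum_eq_zero fun t ht => if_neg (by
      have := Finset.mem_range.mp ht; omega)).symm

lemma sig2_eq (hp : 1 ≤ p) : sig2 p = 1 + EE p (p - 1) p 1 := by
  ext i j
  simp only [sig2, Matrix.of_apply, Matrix.add_apply, Matrix.one_apply, EE]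
  congr 1
  split_ifs with h1 h2 h2 <;> first | rfl | omega

lemma sig3_eq : sig3 p = 1 + EE p p (p + 1) 1 := by
  ext i j
  simp only [sig3, Matrix.of_apply, Matrix.add_apply, Matrix.one_apply, EE]

lemma sig4_eq : sig4 p = 1 + N4 p := by
  ext i j
  simp only [sig4, N4, Matrix.of_apply, Matrix.add_apply, Matrix.one_apply, Matrix.sum_apply, EE]
  congr 1
  by_cases h : (j : ℕ) = (i : ℕ) + 1 ∧ p + 1 ≤ (i : ℕ) ∧ (i : ℕ) + 1 ≤ 2 * p
  · rw [if_pos h, Finset.sum_eq_single ((i : ℕ) - (p + 1))]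
    · rw [if_pos (by omega)]
    · intro t _ ht
      rw [if_neg (by omega)]
    · intro hmem
      exact absurd (Finset.mem_range.mpr (by omega)) hmem
  · rw [if_neg h]
    exact (Finset.sum_eq_zero fun t ht => if_neg (by
      have := Finset.mem_range.mp ht; omega)).symm

lemma isUnit_sig1 : IsUnit (sig1 p) := by
  rw [Matrix.isUnit_iff_isUnit_det]
  have ht : (sig1 p).BlockTriangular id := by
    intro i j hij
    have hij' : (j : ℕ) < (i : ℕ) := hij
    simp only [sig1, Matrix.of_apply]
    rw [if_neg (by exact fun e => by simp [e] at hij'), if_neg (by omega), add_zero]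
  rw [Matrix.det_of_upperTriangular ht]
  have hd : ∀ i, sig1 p i i = 1 := fun i => by simp [sig1]
  simp [hd]

lemma isUnit_sig4 : IsUnit (sig4 p) := by
  rw [Matrix.isUnit_iff_isUnit_det]
  have ht : (sig4 p).BlockTriangular id := by
    intro i j hij
    have hij' : (j : ℕ) < (i : ℕ) := hij
    simp only [sig4, Matrix.of_apply]
    rw [if_neg (by exact fun e => by simp [e] at hij'), if_neg (by omega), add_zero]
  rw [Matrix.det_of_upperTriangular ht]
  have hd : ∀ i, sig4 p i i = 1 := fun i => by simp [sig4]
  simp [hd]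

def gens (p : ℕ) : Set (RR p)ˣ :=
  {u : (RR p)ˣ | (u : RR p) = sig1 p ∨ (u : RR p) = sig2 p ∨
    (u : RR p) = sig3 p ∨ (u : RR p) = sig4 p}

def Mem (p : ℕ) (X : RR p) : Prop :=
  ∃ u ∈ Subgroup.closure (gens p), (u : RR p) = X

lemma Mem.one : Mem p 1 := ⟨1, one_mem _, rfl⟩

lemma Mem.mul {X Y : RR p} (hX : Mem p X) (hY : Mem p Y) : Mem p (X * Y) := by
  obtain ⟨u, hu, rfl⟩ := hX
  obtain ⟨v, hv, rfl⟩ := hY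
  exact ⟨u * v, mul_mem hu hv, Units.val_mul u v⟩

lemma Mem.conjL {X Y : RR p} (hX : Mem p X) {u : (RR p)ˣ}
    (hu : u ∈ Subgroup.closure (gens p)) (h : (u : RR p) * X = Y * (u : RR p)) :
    Mem p Y := by
  obtain ⟨v, hv, rfl⟩ := hX
  refine ⟨u * v * u⁻¹, mul_mem (mul_mem hu hv) (inv_mem hu), ?_⟩
  calc ((u * v * u⁻¹ : (RR p)ˣ) : RR p) = (u : RR p) * v * (↑u⁻¹ : RR p) := by
        rw [Units.val_mul, Units.val_mul]
    _ = Y * (u : RR p) * (↑u⁻¹ : RR p) := by rw [h]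
    _ = Y := by rw [mul_assoc, ← Units.val_mul, mul_inv_cancel, Units.val_one, mul_one]

lemma Mem.conjR {X Y : RR p} (hX : Mem p X) {u : (RR p)ˣ}
    (hu : u ∈ Subgroup.closure (gens p)) (h : X * (u : RR p) = (u : RR p) * Y) :
    Mem p Y := by
  obtain ⟨v, hv, rfl⟩ := hX
  refine ⟨u⁻¹ * v * u, mul_mem (mul_mem (inv_mem hu) hv) hu, ?_⟩
  calc ((u⁻¹ * v * u : (RR p)ˣ) : RR p) = (↑u⁻¹ : RR p) * ((v : RR p) * u) := by
        rw [Units.val_mul, Units.val_mul, mul_assoc]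
    _ = (↑u⁻¹ : RR p) * ((u : RR p) * Y) := by rw [h]
    _ = Y := by rw [← mul_assoc, ← Units.val_mul, inv_mul_cancel, Units.val_one, one_mul]

def EEunit (p a b : ℕ) (c : ZMod p) (h : b ≠ a) : (RR p)ˣ where
  val := 1 + EE p a b c
  inv := 1 + EE p a b (-c)
  val_inv := by
    rw [expand_one_add, EE_mul_ne h, EE_add]
    simp [EE_zero]
  inv_val := by
    rw [expand_one_add, EE_mul_ne h, EE_add]
    simp [EE_zero]

lemma mem_sig1 : Mem p (sig1 p) :=
  ⟨isUnit_sig1.unit, Subgroup.subset_closure (Or.inl isUnit_sig1.unit_spec),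
    isUnit_sig1.unit_spec⟩

lemma mem_sig2' (hp : 2 ≤ p) : Mem p (1 + EE p (p - 1) p 1) :=
  ⟨EEunit p (p - 1) p 1 (by omega),
    Subgroup.subset_closure (Or.inr (Or.inl (sig2_eq (by omega)).symm)),
    (rfl : _ = 1 + EE p (p - 1) p 1)⟩

lemma mem_sig3' : Mem p (1 + EE p p (p + 1) 1) :=
  ⟨EEunit p p (p + 1) 1 (by omega),
    Subgroup.subset_closure (Or.inr (Or.inr (Or.inl sig3_eq.symm))),
    (rfl : _ = 1 + EE p p (p + 1) 1)⟩

lemma mem_EE_gen [NeZero p] {a b : ℕ} (hba : b ≠ a) (hb : Mem p (1 + EE p a b 1))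
    (c : ZMod p) : Mem p (1 + EE p a b c) := by
  have hm : ∀ m : ℕ, Mem p (1 + EE p a b (m : ZMod p)) := by
    intro m
    induction m with
    | zero => simpa [EE_zero] using Mem.one
    | succ k ih =>
        have h2 := ih.mul hb
        rw [expand_one_add, EE_mul_ne hba, add_zero, EE_add] at h2
        rw [Nat.cast_succ]
        exact h2
  have h3 := hm c.val
  rwa [ZMod.natCast_val, ZMod.cast_id] at h3

lemma mem_col [NeZero p] (hp : 2 ≤ p) : ∀ a, a < p → ∀ c : ZMod p, Mem p (1 + EE p a p c) := by
  have key : ∀ d, ∀ c : ZMod p, Mem p (1 + EE p (p - 1 - d) p c) := by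
    intro d
    induction d with
    | zero =>
        intro c
        simpa using mem_EE_gen (p := p) (by omega) (mem_sig2' hp) c
    | succ d ih =>
        intro c
        by_cases hd : d + 1 ≤ p - 1
        · set k := p - 1 - d with hk
          have hk1 : 1 ≤ k := by omega
          have hk2 : k < p := by omega
          have hid : sig1 p * (1 + EE p k p c) =
              (1 + (EE p (k - 1) p c + EE p k p c)) * sig1 p := by
            rw [sig1_eq]
            simp only [mul_add, add_mul, mul_one, one_mul, N1_mul_EE hk1 hk2,
              EE_mul_N1, add_zero, zero_add]
            abel
          have hY : Mem p (1 + (EE p (k - 1) p c + EE p k p c)) :=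
            (ih c).conjL (Subgroup.subset_closure (Or.inl isUnit_sig1.unit_spec))
              (by rw [isUnit_sig1.unit_spec]; exact hid)
          have hprod := hY.mul (ih (-c))
          rw [expand_one_add, add_mul, EE_mul_ne (show p ≠ k by omega),
            EE_mul_ne (show p ≠ k by omega), add_zero, add_zero] at hprod
          have e : EE p (k - 1) p c + EE p k p c + EE p k p (-c) = EE p (k - 1) p c := by
            rw [add_assoc, EE_add]
            simp [EE_zero]
          rw [e] at hprod
          have e2 : p - 1 - (d + 1) = k - 1 := by omega
          rw [e2]
          exact hprod
        · have e : p - 1 - (d + 1) = p - 1 - d := by omega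
          rw [e]
          exact ih c
  intro a ha c
  have e : a = p - 1 - (p - 1 - a) := by omega
  rw [e]
  exact key _ c

lemma mem_colp1 [NeZero p] (hp : 2 ≤ p) {a : ℕ} (ha : a < p) (c : ZMod p) :
    Mem p (1 + EE p a (p + 1) c) := by
  have m1 := mem_col hp a ha c
  have m2 : Mem p (1 + EE p p (p + 1) 1) := mem_sig3'
  have m3 := mem_col hp a ha (-c)
  have m4 : Mem p (1 + EE p p (p + 1) (-1)) := mem_EE_gen (by omega) mem_sig3' (-1)
  have prod := ((m1.mul m2).mul m3).mul m4
  have e1 : (1 + EE p a p c) * (1 + EE p p (p + 1) 1) =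
      1 + (EE p a p c + EE p p (p + 1) 1 + EE p a (p + 1) c) := by
    rw [expand_one_add, EE_mul_eq (by omega), mul_one]
  have e2 : (1 + (EE p a p c + EE p p (p + 1) 1 + EE p a (p + 1) c)) * (1 + EE p a p (-c)) =
      1 + (EE p p (p + 1) 1 + EE p a (p + 1) c) := by
    rw [expand_one_add, add_mul, add_mul, EE_mul_ne (show p ≠ a by omega),
      EE_mul_ne (show p + 1 ≠ a by omega), EE_mul_ne (show p + 1 ≠ a by omega),
      add_zero, add_zero, add_zero]
    congr 1
    rw [show EE p a p c + EE p p (p + 1) 1 + EE p a (p + 1) c + EE p a p (-c) =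
      (EE p a p c + EE p a p (-c)) + (EE p p (p + 1) 1 + EE p a (p + 1) c) from by abel,
      EE_add]
    simp [EE_zero]
  have e3 : (1 + (EE p p (p + 1) 1 + EE p a (p + 1) c)) * (1 + EE p p (p + 1) (-1)) =
      1 + EE p a (p + 1) c := by
    rw [expand_one_add, add_mul, EE_mul_ne (show p + 1 ≠ p by omega),
      EE_mul_ne (show p + 1 ≠ p by omega), add_zero, add_zero]
    congr 1
    rw [show EE p p (p + 1) 1 + EE p a (p + 1) c + EE p p (p + 1) (-1) =
      (EE p p (p + 1) 1 + EE p p (p + 1) (-1)) + EE p a (p + 1) c from by abel,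
      EE_add]
    simp [EE_zero]
  rw [e1, e2, e3] at prod
  exact prod

lemma mem_shift (hp : 2 ≤ p) {a j : ℕ} (ha : a < p) (h1 : p + 1 ≤ j) (h2 : j ≤ 2 * p - 1)
    (ih : ∀ c : ZMod p, Mem p (1 + EE p a j c)) (c : ZMod p) :
    Mem p (1 + EE p a (j + 1) c) := by
  have hid : (1 + EE p a j c) * sig4 p =
      sig4 p * (1 + (EE p a j c + EE p a (j + 1) c)) := by
    rw [sig4_eq]
    simp only [mul_add, add_mul, mul_one, one_mul, EE_mul_N4 h1 h2,
      N4_mul_EE (show a < p + 1 by omega), add_zero, zero_add]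
    abel
  have hY : Mem p (1 + (EE p a j c + EE p a (j + 1) c)) :=
    (ih c).conjR (Subgroup.subset_closure (Or.inr (Or.inr (Or.inr isUnit_sig4.unit_spec))))
      (by rw [isUnit_sig4.unit_spec]; exact hid)
  have hprod := hY.mul (ih (-c))
  rw [expand_one_add, add_mul, EE_mul_ne (show j ≠ a by omega),
    EE_mul_ne (show j + 1 ≠ a by omega), add_zero, add_zero] at hprod
  have e : EE p a j c + EE p a (j + 1) c + EE p a j (-c) = EE p a (j + 1) c := by
    rw [show EE p a j c + EE p a (j + 1) c + EE p a j (-c) =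
      (EE p a j c + EE p a j (-c)) + EE p a (j + 1) c from by abel, EE_add]
    simp [EE_zero]
  rw [e] at hprod
  exact hprod

lemma mem_top [NeZero p] (hp : 2 ≤ p) :
    ∀ b, b < p → ∀ a, a < p → ∀ c : ZMod p, Mem p (1 + EE p a (p + 1 + b) c) := by
  intro b
  induction b with
  | zero => intro _ a ha c; simpa using mem_colp1 hp ha c
  | succ b ih =>
      intro hb a ha c
      have h1 : p + 1 ≤ p + 1 + b := by omega
      have h2 : p + 1 + b ≤ 2 * p - 1 := by omega
      have := mem_shift hp ha h1 h2 (fun c' => ih (by omega) a ha c') c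
      have e : p + 1 + b + 1 = p + 1 + (b + 1) := by omega
      rwa [e] at this

lemma iota_eq (h : Matrix (Fin p) (Fin p) (ZMod p)) :
    iota p p h = 1 + ∑ a : Fin p, ∑ b : Fin p, EE p (a : ℕ) (p + 1 + (b : ℕ)) (h a b) := by
  ext i j
  simp only [iota, Matrix.of_apply, Matrix.add_apply, Matrix.one_apply, Matrix.sum_apply, EE]
  congr 1
  by_cases hij : (i : ℕ) < p ∧ p + 1 ≤ (j : ℕ)
  · rw [dif_pos hij, Finset.sum_eq_single (⟨(i : ℕ), hij.1⟩ : Fin p)]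
    · rw [Finset.sum_eq_single (⟨(j : ℕ) - (p + 1), by have := j.isLt; omega⟩ : Fin p)]
      · rw [if_pos ⟨rfl, by simp; omega⟩]
      · intro b _ hb
        refine if_neg fun hc => hb (Fin.ext ?_)
        simp only [Fin.val_mk]
        omega
      · intro hmem
        exact absurd (Finset.mem_univ _) hmem
    · intro a _ hA
      refine Finset.sum_eq_zero fun b _ => if_neg fun hc => hA (Fin.ext ?_)
      simp only [Fin.val_mk]
      omega
    · intro hmem
      exact absurd (Finset.mem_univ _) hmem
  · rw [dif_neg hij]
    refine (Finset.sum_eq_zero fun a _ => Finset.sum_eq_zero fun b _ => if_neg fun hc => ?_).symm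
    have := a.isLt
    have := b.isLt
    omega

lemma mem_iota [NeZero p] (hp : 2 ≤ p) (h : Matrix (Fin p) (Fin p) (ZMod p)) :
    Mem p (iota p p h) := by
  rw [iota_eq, show (∑ a : Fin p, ∑ b : Fin p, EE p (a : ℕ) (p + 1 + (b : ℕ)) (h a b)) =
    ∑ k : Fin p × Fin p, EE p (k.1 : ℕ) (p + 1 + (k.2 : ℕ)) (h k.1 k.2) from
    (Fintype.sum_prod_type
    (fun k : Fin p × Fin p => EE p (k.1 : ℕ) (p + 1 + (k.2 : ℕ)) (h k.1 k.2))).symm]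
  have H : ∀ s : Finset (Fin p × Fin p),
      Mem p (1 + ∑ k ∈ s, EE p (k.1 : ℕ) (p + 1 + (k.2 : ℕ)) (h k.1 k.2)) := by
    intro s
    induction s using Finset.induction_on with
    | empty => simpa using Mem.one
    | @insert x s hx ih =>
        rw [Finset.sum_insert hx]
        have hxm := mem_top hp x.2 x.2.isLt x.1 x.1.isLt (h x.1 x.2)
        have hm := hxm.mul ih
        rw [expand_one_add] at hm
        have hz : EE p (x.1 : ℕ) (p + 1 + (x.2 : ℕ)) (h x.1 x.2) *
            (∑ k ∈ s, EE p (k.1 : ℕ) (p + 1 + (k.2 : ℕ)) (h k.1 k.2)) = 0 := by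
          rw [Finset.mul_sum]
          refine Finset.sum_eq_zero fun k _ => EE_mul_ne ?_ _ _ _ _
          have := k.1.isLt
          omega
        rw [hz, add_zero] at hm
        exact hm
  exact H Finset.univ

end Stmt10

/-- For a prime `p`, the subgroup of `U_{2p+1}(F_p)` generated by `σ₁', σ₂', σ₃', σ₄'`
contains `S_{2p+1}`, i.e. it contains `ι(h)` for every `p × p` matrix `h` over `F_p`. -/
theorem stmt_10 (p : ℕ) (hp : p.Prime) :
    ∀ h : Matrix (Fin p) (Fin p) (ZMod p),
      ∃ u ∈ Subgroup.closure
        {u : (Matrix (Fin (2 * p + 1)) (Fin (2 * p + 1)) (ZMod p))ˣ |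
          (u : Matrix (Fin (2 * p + 1)) (Fin (2 * p + 1)) (ZMod p)) = sig1 p ∨
          (u : Matrix (Fin (2 * p + 1)) (Fin (2 * p + 1)) (ZMod p)) = sig2 p ∨
          (u : Matrix (Fin (2 * p + 1)) (Fin (2 * p + 1)) (ZMod p)) = sig3 p ∨
          (u : Matrix (Fin (2 * p + 1)) (Fin (2 * p + 1)) (ZMod p)) = sig4 p},
        (u : Matrix (Fin (2 * p + 1)) (Fin (2 * p + 1)) (ZMod p)) = iota p p h := by
  intro h
  haveI : NeZero p := ⟨hp.ne_zero⟩
  exact Stmt10.mem_iota hp.two_le h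
end

section
/- Let p be a prime, G a finite p-group, and V a module over the group algebra F_p[G]. Suppose v ∈ V satisfies Σ_{g ∈ G} g·v ≠ 0. Then the F_p[G]-module map F_p[G] → V sending x to x·v is injective; in particular the F_p[G]-submodule of V generated by v is a free F_p[G]-module of rank 1. -/
/-!
Let `N = ∑ g, g` be the norm element of `k[G]`, for `k` a finite field of characteristic `p`.
A nonzero left ideal `I` of `k[G]` is a nontrivial finite `p`-group on which `G` acts by left
multiplication fixing `0`, so by counting fixed points modulo `p` it contains a nonzero element `x`
with `g x = x` for all `g`. Such an `x` has constant coefficients, i.e. is a nonzero multiple of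
`N`, hence `N ∈ I`. Applied to the kernel of `x ↦ x • v`, this shows the kernel is zero as soon as
`N • v ≠ 0`.
-/

open MonoidAlgebra

theorem FiniteField.prime_dvd_natCard (k : Type*) [Field k] [Finite k] (p : ℕ) [CharP k p] :
    p ∣ Nat.card k := by
  have := Fintype.ofFinite k
  obtain ⟨n, -, hn⟩ := FiniteField.card k p
  rw [Nat.card_eq_fintype_card, hn]
  exact dvd_pow_self p n.ne_zero

theorem Module.prime_dvd_natCard_of_nontrivial (k W : Type*) [Field k] [Finite k] (p : ℕ)
    [CharP k p] [AddCommGroup W] [Module k W] [Module.Finite k W] [Nontrivial W] :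
    p ∣ Nat.card W := by
  rw [Module.natCard_eq_pow_finrank (K := k)]
  exact (FiniteField.prime_dvd_natCard k p).trans (dvd_pow_self _ Module.finrank_pos.ne')

theorem IsPGroup.exists_ne_zero_forall_smul_eq {p : ℕ} [Fact p.Prime] {G : Type*} [Group G]
    (hG : IsPGroup p G) (W : Type*) [AddMonoid W] [DistribMulAction G W] [Finite W]
    (hW : p ∣ Nat.card W) : ∃ w : W, w ≠ 0 ∧ ∀ g : G, g • w = w := by
  obtain ⟨w, hw, h0w⟩ :=
    hG.exists_fixed_point_of_prime_dvd_card_of_fixed_point W hW (a := 0) (smul_zero ·)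
  exact ⟨w, h0w.symm, hw⟩

theorem MonoidAlgebra.eq_coeff_one_smul_sum_of_forall_of_mul_eq {k G : Type*} [Semiring k]
    [Group G] [Fintype G] {x : k[G]} (hx : ∀ g : G, of k G g * x = x) :
    x = x.coeff 1 • ∑ g : G, of k G g := by
  ext h
  have hxh : x.coeff h = x.coeff 1 := by
    simpa only [of_apply, coeff_single_mul_apply, inv_mul_cancel, one_mul] using
      (congrArg (fun y : k[G] => y.coeff h) (hx h)).symm
  simp [coeff_sum, hxh]

namespace IsPGroup

variable {p : ℕ} [Fact p.Prime] {k G : Type*} [Field k] [Finite k] [CharP k p] [Group G]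
  [Fintype G]

theorem sum_of_mem_of_ne_bot (hG : IsPGroup p G) {I : Submodule k[G] k[G]} (hI : I ≠ ⊥) :
    ∑ g : G, of k G g ∈ I := by
  let : DistribMulAction G I := DistribMulAction.compHom I (of k G)
  have : Nontrivial I := Submodule.nontrivial_iff_ne_bot.mpr hI
  have : Finite I := Module.finite_of_finite k
  obtain ⟨⟨x, hxI⟩, hx0, hfix⟩ :=
    hG.exists_ne_zero_forall_smul_eq I (Module.prime_dvd_natCard_of_nontrivial k I p)
  obtain ⟨c, hx⟩ : ∃ c : k, x = c • ∑ g : G, of k G g :=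
    ⟨_, eq_coeff_one_smul_sum_of_forall_of_mul_eq fun g ↦ congrArg Subtype.val (hfix g)⟩
  have hc : c ≠ 0 := by
    rintro rfl
    exact hx0 (Subtype.ext (by simp [hx]))
  have hmem := I.smul_of_tower_mem c⁻¹ hxI
  rwa [hx, smul_smul, inv_mul_cancel₀ hc, one_smul] at hmem

theorem injective_smul_of_sum_smul_ne_zero (hG : IsPGroup p G) {V : Type*} [AddCommGroup V]
    [Module k[G] V] {v : V} (hv : ∑ g : G, of k G g • v ≠ 0) :
    Function.Injective (fun x : k[G] ↦ x • v) := by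
  change Function.Injective (LinearMap.toSpanSingleton k[G] V v)
  rw [← LinearMap.ker_eq_bot]
  by_contra hker
  apply hv
  simpa [Finset.sum_smul] using hG.sum_of_mem_of_ne_bot hker

end IsPGroup

/-- Let `p` be a prime, `G` a finite `p`-group and `V` a module over the group algebra
`F_p[G]`. If `v ∈ V` satisfies `Σ_{g ∈ G} g·v ≠ 0`, then the `F_p[G]`-module map
`F_p[G] → V`, `x ↦ x·v`, is injective; in particular the `F_p[G]`-submodule generated
by `v` is free of rank `1` (it is isomorphic to `F_p[G]` itself). -/
theorem stmt_13 (p : ℕ) (hp : p.Prime) (G : Type*) [Group G] [Fintype G]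
    (hG : IsPGroup p G)
    (V : Type*) [AddCommGroup V] [Module (MonoidAlgebra (ZMod p) G) V]
    (v : V)
    (hv : (∑ g : G, MonoidAlgebra.of (ZMod p) G g • v) ≠ 0) :
    Function.Injective (fun x : MonoidAlgebra (ZMod p) G => x • v) ∧
    Nonempty (MonoidAlgebra (ZMod p) G ≃ₗ[MonoidAlgebra (ZMod p) G]
      Submodule.span (MonoidAlgebra (ZMod p) G) {v}) := by
  have : Fact p.Prime := ⟨hp⟩
  have hinj := hG.injective_smul_of_sum_smul_ne_zero hv
  exact ⟨hinj, ⟨(LinearEquiv.ofInjective (LinearMap.toSpanSingleton _ V v) hinj).trans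
    (LinearEquiv.ofEq _ _ (LinearMap.range_toSpanSingleton v))⟩⟩
end

section
/- Let p be an odd prime and F a field containing a primitive p-th root of unity. Let x ∈ F^× be an element that is not a p-th power in F, and let α be a root of X^p − x in an algebraic closure of F. Then the norm N_{F(α)/F}(α) equals x, and α is not a p-th power in the field F(α). -/
open IntermediateField Polynomial

/-- Let `p` be an odd prime and `F` a field containing a primitive `p`-th root of unity.
If `x ∈ F^×` is not a `p`-th power in `F` and `α` is a root of `X^p − x` in an algebraic
closure of `F`, then `N_{F(α)/F}(α) = x`, and `α` is not a `p`-th power in `F(α)`. -/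
theorem stmt_16 (p : ℕ) (hp : p.Prime) (hodd : Odd p)
    (F : Type*) [Field F] (ζ : F) (hζ : IsPrimitiveRoot ζ p)
    (x : F) (hx0 : x ≠ 0) (hx : ¬∃ y : F, y ^ p = x)
    (α : AlgebraicClosure F) (hα : α ^ p = algebraMap F (AlgebraicClosure F) x) :
    Algebra.norm F (IntermediateField.AdjoinSimple.gen F α) = x ∧
    ¬∃ y : F⟮α⟯, y ^ p = IntermediateField.AdjoinSimple.gen F α := by
  push_neg at hx
  have hint : IsIntegral F α := Algebra.IsIntegral.isIntegral α
  have hirr : Irreducible (X ^ p - C x) :=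
    X_pow_sub_C_irreducible_of_prime hp hx
  have hroot : Polynomial.aeval α (X ^ p - C x) = 0 := by
    simp [hα]
  have hmin : minpoly F α = X ^ p - C x :=
    (minpoly.eq_of_irreducible_of_monic hirr hroot (monic_X_pow_sub_C x hp.ne_zero)).symm
  have hnorm : Algebra.norm F (IntermediateField.AdjoinSimple.gen F α) = x := by
    rw [← IntermediateField.adjoin.powerBasis_gen hint,
      Algebra.PowerBasis.norm_gen_eq_coeff_zero_minpoly]
    simp [IntermediateField.minpoly_gen, hmin, hp.ne_zero.symm,
      IntermediateField.adjoin.powerBasis_dim, hodd.neg_pow]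
  refine ⟨hnorm, ?_⟩
  rintro ⟨y, hy⟩
  apply hx (Algebra.norm F y)
  rw [← map_pow, hy, hnorm]
end

section
/- Let p be a prime, F a field containing a primitive p-th root of unity ζ, and a, d ∈ F^×. Set ℰ = F[X,Y]/(X^p − a, Y^p − d), F_a = F[X]/(X^p − a), F_d = F[Y]/(Y^p − d), with their natural F-algebra maps into ℰ. Let B be the image in ℰ of an element of F_a and C the image in ℰ of an element of F_d. Then the following are equivalent: (1) there exist x₀, …, x_{p−1} ∈ ℰ such that in the algebra ℰ[R]/(R^p − B) one has ∏_{ω ∈ μ_p} ( x₀ + x₁ω R + x₂ω²R² + ⋯ + x_{p−1}ω^{p−1}R^{p−1} ) = C; (2) for every field extension K/F and every F-algebra homomorphism θ : ℰ → K, there exist x₀, …, x_{p−1} ∈ K such that in K[R]/(R^p − θ(B)) one has ∏_{ω ∈ μ_p} ( x₀ + x₁ω R + ⋯ + x_{p−1}ω^{p−1}R^{p−1} ) = θ(C). -/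
/-- The ideal `(X^p − a, Y^p − d)` of `F[X,Y]`. -/
noncomputable def EIdeal (p : ℕ) (F : Type) [Field F] (a d : F) :
    Ideal (MvPolynomial (Fin 2) F) :=
  Ideal.span {MvPolynomial.X 0 ^ p - MvPolynomial.C a,
    MvPolynomial.X 1 ^ p - MvPolynomial.C d}

/-- The étale algebra `ℰ = F[X,Y]/(X^p − a, Y^p − d)`. -/
abbrev Ealg (p : ℕ) (F : Type) [Field F] (a d : F) : Type :=
  MvPolynomial (Fin 2) F ⧸ EIdeal p F a d

noncomputable instance (p : ℕ) (F : Type) [Field F] (a d : F) : CommRing (Ealg p F a d) :=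
  Ideal.Quotient.commRing (EIdeal p F a d)

/-- The image `B` in `ℰ` of an element `B₀` of `F_a = F[X]/(X^p − a)` (given by a
polynomial in the variable `X`). -/
noncomputable def Bel (p : ℕ) (F : Type) [Field F] (a d : F) (B₀ : Polynomial F) :
    Ealg p F a d :=
  Polynomial.aeval (Ideal.Quotient.mk (EIdeal p F a d) (MvPolynomial.X 0)) B₀

/-- The image `C` in `ℰ` of an element `C₀` of `F_d = F[Y]/(Y^p − d)` (given by a
polynomial in the variable `Y`). -/
noncomputable def Cel (p : ℕ) (F : Type) [Field F] (a d : F) (C₀ : Polynomial F) :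
    Ealg p F a d :=
  Polynomial.aeval (Ideal.Quotient.mk (EIdeal p F a d) (MvPolynomial.X 1)) C₀

/-!
(1) ⇒ (2) is obtained by applying `θ`. For the converse, `ℰ` is generated by `x, y` with
`x^p = a`, `y^p = d`; as `p`, `x`, `y` are units, `p x^{p-1} dx = d(a) = 0` forces `dx = 0`, and
likewise `dy = 0`, so `Ω[ℰ/F] = 0`. Hence `ℰ` is étale over `F`, i.e. a finite product of fields.
Solving in each factor and gluing gives `x₀, …, x_{p-1}` in `ℰ`; divisibility by the monic
`R^p - B` can be checked factorwise, because reduction modulo a monic polynomial commutes with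
base change.
-/

open Polynomial

theorem Derivation.map_eq_zero_of_pow_eq_algebraMap {R A M : Type*} [CommRing R] [CommRing A]
    [Algebra R A] [AddCommGroup M] [Module A M] [Module R M] [IsScalarTower R A M]
    (δ : Derivation R A M) {x : A} {n : ℕ} {c : R} (hx : x ^ n = algebraMap R A c)
    (hunit : IsUnit ((n : A) * x ^ (n - 1))) : δ x = 0 := by
  have h : ((n : A) * x ^ (n - 1)) • δ x = 0 := by
    rw [mul_smul, Nat.cast_smul_eq_nsmul, ← δ.leibniz_pow, hx, δ.map_algebraMap]
  exact (hunit.smul_left_cancel).mp (h.trans (smul_zero _).symm)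

theorem Algebra.FormallyUnramified.of_adjoin_eq_top_of_pow_eq_algebraMap {R A : Type*}
    [CommRing R] [CommRing A] [Algebra R A] {s : Set A} (hs : Algebra.adjoin R s = ⊤)
    (hrad : ∀ x ∈ s, ∃ (n : ℕ) (c : R),
      x ^ n = algebraMap R A c ∧ IsUnit ((n : A) * x ^ (n - 1))) :
    Algebra.FormallyUnramified R A := by
  have hD : KaehlerDifferential.D R A = 0 := by
    refine Derivation.ext_of_adjoin_eq_top _ hs fun x hx => ?_
    obtain ⟨n, c, hxn, hunit⟩ := hrad x hx
    exact (KaehlerDifferential.D R A).map_eq_zero_of_pow_eq_algebraMap hxn hunit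
  refine ⟨subsingleton_of_forall_eq 0 fun ω => ?_⟩
  have hω : ω ∈ Submodule.span A (Set.range (KaehlerDifferential.D R A)) := by
    rw [KaehlerDifferential.span_range_derivation]; trivial
  simpa [hD] using hω

theorem Polynomial.dvd_of_forall_map_dvd {A ι : Type*} [CommRing A] {K : ι → Type*}
    [∀ i, CommRing (K i)] (φ : ∀ i, A →+* K i)
    (hφ : ∀ z, (∀ i, φ i z = 0) → z = 0) {f g : A[X]} (hf : f.Monic)
    (h : ∀ i, f.map (φ i) ∣ g.map (φ i)) : f ∣ g := by
  rw [← modByMonic_eq_zero_iff_dvd hf]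
  ext n
  refine hφ _ fun i => ?_
  rw [← coeff_map, map_modByMonic _ hf, (modByMonic_eq_zero_iff_dvd (hf.map _)).mpr (h i),
    coeff_zero]

section KummerNorm

variable {F : Type*} [Field F] (p : ℕ) (ζ : F)

/-- For `x(R) = ∑_{i < p} x_i R^i`, the product `∏_{k < p} x(ζ^k R)`; modulo `R^p - B` it is the
norm of `x(R)` from `K[R]/(R^p - B)` to `K`. -/
noncomputable def kummerNormPoly {K : Type*} [CommRing K] [Algebra F K] (x : ℕ → K) : K[X] :=
  ∏ k ∈ Finset.range p, ∑ i ∈ Finset.range p, C (x i * algebraMap F K ζ ^ (k * i)) * X ^ i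

variable {p ζ}

theorem map_kummerNormPoly {K L : Type*} [CommRing K] [Algebra F K] [CommRing L] [Algebra F L]
    (θ : K →ₐ[F] L) (x : ℕ → K) :
    (kummerNormPoly p ζ x).map (θ : K →+* L) = kummerNormPoly p ζ (θ ∘ x) := by
  simp [kummerNormPoly, Polynomial.map_prod, Polynomial.map_sum]

theorem exists_dvd_kummerNormPoly_sub_of_algEquiv_pi {A ι : Type*} [CommRing A] [Algebra F A]
    {K : ι → Type*} [∀ i, CommRing (K i)] [∀ i, Algebra F (K i)] (e : A ≃ₐ[F] ∀ i, K i)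
    (hp : p ≠ 0) {B c : A}
    (h : ∀ i, ∃ y : ℕ → K i, X ^ p - C (e B i) ∣ kummerNormPoly p ζ y - C (e c i)) :
    ∃ x : ℕ → A, X ^ p - C B ∣ kummerNormPoly p ζ x - C c := by
  choose y hy using h
  let θ i : A →ₐ[F] K i := (Pi.evalAlgHom F K i).comp e.toAlgHom
  refine ⟨fun n => e.symm fun i => y i n, ?_⟩
  refine dvd_of_forall_map_dvd (fun i => (θ i : A →+* K i)) (fun z hz => ?_)
    (monic_X_pow_sub_C B hp) fun i => ?_
  · exact e.injective (funext hz |>.trans (map_zero e).symm)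
  · simpa [θ, Polynomial.map_sub, map_kummerNormPoly, Function.comp_def] using hy i

theorem dvd_kummerNormPoly_sub_map {K L : Type*} [CommRing K] [Algebra F K] [CommRing L]
    [Algebra F L] (θ : K →ₐ[F] L) {B c : K} {x : ℕ → K}
    (h : X ^ p - C B ∣ kummerNormPoly p ζ x - C c) :
    X ^ p - C (θ B) ∣ kummerNormPoly p ζ (θ ∘ x) - C (θ c) := by
  simpa [Polynomial.map_sub, map_kummerNormPoly] using Polynomial.map_dvd (θ : K →+* L) h

theorem prod_mk_eq_mk_iff_dvd {K : Type*} [CommRing K] [Algebra F K] (B c : K) (x : ℕ → K) :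
    ∏ k ∈ Finset.range p, Ideal.Quotient.mk (Ideal.span {X ^ p - C B})
        (∑ i ∈ Finset.range p, C (x i * algebraMap F K ζ ^ (k * i)) * X ^ i) =
      Ideal.Quotient.mk (Ideal.span {X ^ p - C B}) (C c) ↔
    X ^ p - C B ∣ kummerNormPoly p ζ x - C c := by
  rw [← map_prod, Ideal.Quotient.eq, Ideal.mem_span_singleton]
  rfl

end KummerNorm

namespace Ealg

variable {p : ℕ} {F : Type} [Field F] {a d : F}

theorem mk_X_pow (i : Fin 2) :
    Ideal.Quotient.mk (EIdeal p F a d) (MvPolynomial.X i) ^ p = algebraMap F _ (![a, d] i) := by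
  rw [← Ideal.Quotient.mk_algebraMap, MvPolynomial.algebraMap_eq, ← map_pow, ← sub_eq_zero,
    ← map_sub, Ideal.Quotient.eq_zero_iff_mem]
  fin_cases i <;> exact Ideal.subset_span (by simp)

theorem adjoin_range_mk_X :
    Algebra.adjoin F (Set.range fun i => Ideal.Quotient.mk (EIdeal p F a d) (MvPolynomial.X i))
      = ⊤ := by
  rw [show (fun i => Ideal.Quotient.mk (EIdeal p F a d) (MvPolynomial.X i))
      = Ideal.Quotient.mkₐ F _ ∘ MvPolynomial.X from rfl, Set.range_comp, ← AlgHom.map_adjoin,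
    MvPolynomial.adjoin_range_X, Algebra.map_top, AlgHom.range_eq_top]
  exact Ideal.Quotient.mkₐ_surjective F _

theorem formallyUnramified (hp : (p : F) ≠ 0) (ha : a ≠ 0) (hd : d ≠ 0) :
    Algebra.FormallyUnramified F (Ealg p F a d) := by
  refine .of_adjoin_eq_top_of_pow_eq_algebraMap adjoin_range_mk_X ?_
  rintro _ ⟨i, rfl⟩
  refine ⟨p, ![a, d] i, mk_X_pow i, ?_⟩
  have hai : ![a, d] i ≠ 0 := by fin_cases i <;> assumption
  have hx : IsUnit (Ideal.Quotient.mk (EIdeal p F a d) (MvPolynomial.X i)) := by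
    refine (isUnit_pow_iff (n := p) (by rintro rfl; simp at hp)).mp ?_
    rw [mk_X_pow]
    exact hai.isUnit.map _
  rw [← map_natCast (algebraMap F (Ealg p F a d))]
  exact (hp.isUnit.map _).mul (hx.pow _)

end Ealg

/-- Let `p` be a prime, `F` a field containing a primitive `p`-th root of unity `ζ`, and
`a, d ∈ F^×`. Let `B` be the image in `ℰ = F[X,Y]/(X^p − a, Y^p − d)` of an element of
`F_a = F[X]/(X^p − a)` and `C` the image of an element of `F_d = F[Y]/(Y^p − d)`.
The following are equivalent:
(1) there are `x₀, …, x_{p−1} ∈ ℰ` with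
`∏_{ω ∈ μ_p} (x₀ + x₁ωR + x₂ω²R² + ⋯ + x_{p−1}ω^{p−1}R^{p−1}) = C` in `ℰ[R]/(R^p − B)`
(where `μ_p = {ζ^k : 0 ≤ k < p}`);
(2) for every field extension `K/F` and every `F`-algebra homomorphism `θ : ℰ → K`, there
are `x₀, …, x_{p−1} ∈ K` with
`∏_{ω ∈ μ_p} (x₀ + x₁ωR + ⋯ + x_{p−1}ω^{p−1}R^{p−1}) = θ(C)` in `K[R]/(R^p − θ(B))`. -/
theorem stmt_17 (p : ℕ) (hp : p.Prime) (F : Type) [Field F]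
    (ζ : F) (hζ : IsPrimitiveRoot ζ p) (a d : F) (ha : a ≠ 0) (hd : d ≠ 0)
    (B₀ C₀ : Polynomial F) :
    (∃ x : ℕ → Ealg p F a d,
      ∏ k ∈ Finset.range p,
        Ideal.Quotient.mk
          (Ideal.span {Polynomial.X ^ p - Polynomial.C (Bel p F a d B₀)})
          (∑ i ∈ Finset.range p,
            Polynomial.C (x i * algebraMap F (Ealg p F a d) ζ ^ (k * i)) *
              Polynomial.X ^ i) =
        Ideal.Quotient.mk
          (Ideal.span {Polynomial.X ^ p - Polynomial.C (Bel p F a d B₀)})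
          (Polynomial.C (Cel p F a d C₀))) ↔
    (∀ (K : Type) [Field K] [Algebra F K] (θ : Ealg p F a d →ₐ[F] K),
      ∃ x : ℕ → K,
      ∏ k ∈ Finset.range p,
        Ideal.Quotient.mk
          (Ideal.span {Polynomial.X ^ p - Polynomial.C (θ (Bel p F a d B₀))})
          (∑ i ∈ Finset.range p,
            Polynomial.C (x i * algebraMap F K ζ ^ (k * i)) * Polynomial.X ^ i) =
        Ideal.Quotient.mk
          (Ideal.span {Polynomial.X ^ p - Polynomial.C (θ (Bel p F a d B₀))})
          (Polynomial.C (θ (Cel p F a d C₀)))) := by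
  have : NeZero p := ⟨hp.ne_zero⟩
  have hpF : (p : F) ≠ 0 := hζ.neZero'.out
  have := Ealg.formallyUnramified hpF ha hd
  have := Algebra.FormallyEtale.of_formallyUnramified_of_field F (Ealg p F a d)
  obtain ⟨I, _, K, _, _, e, -⟩ :=
    (Algebra.FormallyEtale.iff_exists_algEquiv_prod F (Ealg p F a d)).mp inferInstance
  simp only [prod_mk_eq_mk_iff_dvd]
  refine ⟨fun ⟨x, hx⟩ L _ _ θ => ⟨θ ∘ x, dvd_kummerNormPoly_sub_map θ hx⟩, fun h => ?_⟩
  exact exists_dvd_kummerNormPoly_sub_of_algEquiv_pi e hp.ne_zero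
    fun i => h (K i) ((Pi.evalAlgHom F K i).comp e)
end
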